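/- arXiv:2302.05902 — 5 statements merged into one kernel-verified Lean document; each statement's English description precedes it below -/
import Mathlib

section
/- Let N ≥ 5, ω = exp(2πi/N), and define ξ_{ij} ∈ ℂ^N as above. If i = k and j ≠ l, or i ≠ k and j = l, then ⟨ξ_{ij}, ξ_{kl}⟩ = 0. In particular, for each fixed i the vectors (ξ_{ij})_{j=1}^N form an orthonormal basis of ℂ^N, and for each fixed j the vectors (ξ_{ij})_{i=1}^N form an orthonormal basis of ℂ^N. -/
/-!
Let `F_m = (ω^{pm}/√N)_{p=1..N}` be the discrete Fourier vectors, so that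
`⟨F_m, F_{m'}⟩ = 1` if `N ∣ m' - m` and `0` otherwise (a geometric sum over roots of unity).
Since `ω^{1·(i-j)} = ω^{i-j}` and `ω^{N(i-j)} = 1`, the vector `ξ_{ij}` is `F_{i-j}` with its first
and last coordinates multiplied by `ω^{1-i}` and `ω^{i-1}`: unimodular factors depending on `i`
alone. After exchanging the first and last coordinates, `ξ_{ij}` is likewise `F_{i-j}` twisted by
`ω^{j-1}` and `ω^{1-j}`, depending on `j` alone. Such twists preserve inner products, so within a
row or a column `⟨ξ_{ij}, ξ_{kl}⟩ = ⟨F_{i-j}, F_{k-l}⟩`, and `N ∤ (k - l) - (i - j)` there.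
-/

open Complex

/-- `ω = exp(2πi/N)`. -/
noncomputable def omegaN (N : ℕ) : ℂ := Complex.exp (2 * Real.pi * Complex.I / N)

/-- The vector `ξ_{ij} ∈ ℂ^N`: coordinate `p` (for `p = 1, …, N`, encoded as `p : Fin N`
with value `p+1`) is `ω^{1-j}/√N` if `p = 1`, `ω^{i-1}/√N` if `p = N`,
and `ω^{p(i-j)}/√N` otherwise. -/
noncomputable def xiVec (N : ℕ) (i j : ℤ) : EuclideanSpace ℂ (Fin N) :=
  WithLp.toLp 2 fun p =>
    if (p : ℕ) = 0 then omegaN N ^ (1 - j) / (Real.sqrt N : ℂ)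
    else if (p : ℕ) = N - 1 then omegaN N ^ (i - 1) / (Real.sqrt N : ℂ)
    else omegaN N ^ ((((p : ℕ) : ℤ) + 1) * (i - j)) / (Real.sqrt N : ℂ)

theorem inner_eq_inner_of_twist {ι : Type*} [Fintype ι] (σ : Equiv.Perm ι) (u : ι → ℂ)
    (hu : ∀ p, ‖u p‖ = 1) {x y a b : EuclideanSpace ℂ ι} (hx : ∀ p, x (σ p) = u p * a p)
    (hy : ∀ p, y (σ p) = u p * b p) :
    inner ℂ x y = inner ℂ a b := by
  simp only [PiLp.inner_apply, RCLike.inner_apply]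
  rw [← Equiv.sum_comp σ]
  refine Finset.sum_congr rfl fun p _ => ?_
  rw [hx, hy, map_mul, mul_mul_mul_comm, mul_conj', hu, ofReal_one, one_pow, one_mul]

theorem orthonormal_and_span_eq_top_of_inner_eq_ite {𝕜 ι : Type*} [RCLike 𝕜] [Fintype ι]
    [DecidableEq ι] {v : ι → EuclideanSpace 𝕜 ι}
    (hv : ∀ p q, inner 𝕜 (v p) (v q) = if p = q then 1 else 0) :
    Orthonormal 𝕜 v ∧ Submodule.span 𝕜 (Set.range v) = ⊤ :=
  have hon := orthonormal_iff_ite.2 hv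
  ⟨hon, hon.linearIndependent.span_eq_top_of_card_eq_finrank' finrank_euclideanSpace.symm⟩

theorem sum_fin_pow_succ_eq_zero {K : Type*} [Field K] {z : K} {N : ℕ} (hz : z ≠ 1)
    (hzN : z ^ N = 1) : ∑ p : Fin N, z ^ ((p : ℕ) + 1) = 0 := by
  simp only [pow_succ', ← Finset.mul_sum]
  rw [Fin.sum_univ_eq_sum_range (z ^ ·), geom_sum_eq hz, hzN, sub_self, zero_div, mul_zero]

theorem natCast_dvd_sub_iff_eq {N : ℕ} {a b : ℤ} (ha : 1 ≤ a) (ha' : a ≤ N) (hb : 1 ≤ b)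
    (hb' : b ≤ N) : (N : ℤ) ∣ a - b ↔ a = b := by
  refine ⟨fun h => ?_, fun h => by rw [h, sub_self]; exact dvd_zero _⟩
  have := Int.eq_zero_of_abs_lt_dvd h (abs_lt.2 ⟨by omega, by omega⟩)
  omega

theorem omegaN_ne_zero (N : ℕ) : omegaN N ≠ 0 := Complex.exp_ne_zero _

theorem norm_omegaN (N : ℕ) : ‖omegaN N‖ = 1 := by
  simp [omegaN, Complex.norm_exp]

theorem isPrimitiveRoot_omegaN {N : ℕ} (hN : N ≠ 0) : IsPrimitiveRoot (omegaN N) N :=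
  Complex.isPrimitiveRoot_exp N hN

theorem omegaN_zpow_natCast_mul (N : ℕ) (m : ℤ) : omegaN N ^ ((N : ℤ) * m) = 1 := by
  rcases eq_or_ne N 0 with rfl | hN
  · simp
  · exact ((isPrimitiveRoot_omegaN hN).zpow_eq_one_iff_dvd _).2 (dvd_mul_right _ _)

noncomputable def fourierVec (N : ℕ) (m : ℤ) : EuclideanSpace ℂ (Fin N) :=
  WithLp.toLp 2 fun p => omegaN N ^ ((((p : ℕ) : ℤ) + 1) * m) / (Real.sqrt N : ℂ)

theorem fourierVec_apply (N : ℕ) (m : ℤ) (p : Fin N) :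
    fourierVec N m p = (omegaN N ^ m) ^ ((p : ℕ) + 1) / (Real.sqrt N : ℂ) := by
  rw [fourierVec, PiLp.toLp_apply, ← zpow_natCast, ← zpow_mul, mul_comm]
  push_cast; rfl

theorem inner_fourierVec {N : ℕ} (hN : N ≠ 0) (m m' : ℤ) :
    inner ℂ (fourierVec N m) (fourierVec N m') = if (N : ℤ) ∣ m' - m then 1 else 0 := by
  have hω := isPrimitiveRoot_omegaN hN
  have hsq : (Real.sqrt N : ℂ) * (Real.sqrt N : ℂ) = N := by
    rw [← ofReal_mul, Real.mul_self_sqrt (Nat.cast_nonneg N)]; norm_cast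
  have hterm : ∀ p : Fin N, inner ℂ (fourierVec N m p) (fourierVec N m' p)
      = (omegaN N ^ (m' - m)) ^ ((p : ℕ) + 1) / N := by
    intro p
    rw [RCLike.inner_apply, fourierVec_apply, fourierVec_apply, map_div₀, map_pow, conj_ofReal,
      ← inv_eq_conj (by rw [norm_zpow, norm_omegaN, one_zpow]), div_mul_div_comm, ← mul_pow,
      hsq, zpow_sub₀ (omegaN_ne_zero N), div_eq_mul_inv (omegaN N ^ m')]
  simp only [PiLp.inner_apply, hterm, ← Finset.sum_div]
  split_ifs with hdvd
  · simp [(hω.zpow_eq_one_iff_dvd _).2 hdvd, hN]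
  · rw [sum_fin_pow_succ_eq_zero (mt (hω.zpow_eq_one_iff_dvd _).1 hdvd), zero_div]
    rw [← zpow_natCast, ← zpow_mul, (hω.zpow_eq_one_iff_dvd _).2 (dvd_mul_left _ _)]

noncomputable def rowTwist (N : ℕ) (i : ℤ) (p : Fin N) : ℂ :=
  omegaN N ^ (if (p : ℕ) = 0 then 1 - i else if (p : ℕ) = N - 1 then i - 1 else 0)

theorem norm_rowTwist (N : ℕ) (i : ℤ) (p : Fin N) : ‖rowTwist N i p‖ = 1 := by
  rw [rowTwist, norm_zpow, norm_omegaN, one_zpow]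

theorem xiVec_apply_eq_rowTwist_mul (N : ℕ) (i j : ℤ) (p : Fin N) :
    xiVec N i j p = rowTwist N i p * fourierVec N (i - j) p := by
  simp only [xiVec, fourierVec, rowTwist, PiLp.toLp_apply]
  split_ifs with h0 hl
  · rw [mul_div_assoc', ← zpow_add₀ (omegaN_ne_zero N), h0]; ring_nf
  · have hp : ((p : ℕ) : ℤ) + 1 = N := by omega
    rw [hp, omegaN_zpow_natCast_mul, mul_one_div]
  · rw [zpow_zero, one_mul]

theorem inner_xiVec_of_fst_eq (N : ℕ) (i j l : ℤ) :
    inner ℂ (xiVec N i j) (xiVec N i l) = inner ℂ (fourierVec N (i - j)) (fourierVec N (i - l)) :=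
  inner_eq_inner_of_twist (Equiv.refl _) (rowTwist N i) (norm_rowTwist N i)
    (xiVec_apply_eq_rowTwist_mul N i j) (xiVec_apply_eq_rowTwist_mul N i l)

def swapEnds (N : ℕ) (hN : 0 < N) : Equiv.Perm (Fin N) :=
  Equiv.swap ⟨0, hN⟩ ⟨N - 1, by omega⟩

noncomputable def colTwist (N : ℕ) (j : ℤ) (p : Fin N) : ℂ :=
  omegaN N ^ (if (p : ℕ) = 0 then j - 1 else if (p : ℕ) = N - 1 then 1 - j else 0)

theorem norm_colTwist (N : ℕ) (j : ℤ) (p : Fin N) : ‖colTwist N j p‖ = 1 := by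
  rw [colTwist, norm_zpow, norm_omegaN, one_zpow]

theorem xiVec_swapEnds_apply_eq_colTwist_mul {N : ℕ} (hN : 1 < N) (i j : ℤ) (p : Fin N) :
    xiVec N i j (swapEnds N (Nat.zero_lt_of_lt hN) p) =
      colTwist N j p * fourierVec N (i - j) p := by
  have hω := omegaN_ne_zero N
  have hN1 : N - 1 ≠ 0 := by omega
  have hcast : ((N - 1 : ℕ) : ℤ) + 1 = N := by omega
  by_cases h0 : (p : ℕ) = 0
  · have hp : swapEnds N (Nat.zero_lt_of_lt hN) p = ⟨N - 1, by omega⟩ := by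
      rw [swapEnds, show p = ⟨0, by omega⟩ from Fin.ext h0, Equiv.swap_apply_left]
    simp only [xiVec, fourierVec, colTwist, PiLp.toLp_apply, hp, h0, hN1, ↓reduceIte]
    rw [mul_div_assoc', ← zpow_add₀ hω]
    ring_nf
  by_cases hl : (p : ℕ) = N - 1
  · have hp : swapEnds N (Nat.zero_lt_of_lt hN) p = ⟨0, Nat.zero_lt_of_lt hN⟩ := by
      rw [swapEnds, show p = ⟨N - 1, by omega⟩ from Fin.ext hl, Equiv.swap_apply_right]
    simp only [xiVec, fourierVec, colTwist, PiLp.toLp_apply, hp, hl, hN1, hcast, ↓reduceIte,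
      omegaN_zpow_natCast_mul, mul_one_div]
  · have hp : swapEnds N (Nat.zero_lt_of_lt hN) p = p :=
      Equiv.swap_apply_of_ne_of_ne (fun h => h0 (by rw [h])) (fun h => hl (by rw [h]))
    simp only [xiVec, fourierVec, colTwist, PiLp.toLp_apply, hp, h0, hl, ↓reduceIte, zpow_zero,
      one_mul]

theorem inner_xiVec_of_snd_eq {N : ℕ} (hN : 1 < N) (i k j : ℤ) :
    inner ℂ (xiVec N i j) (xiVec N k j) = inner ℂ (fourierVec N (i - j)) (fourierVec N (k - j)) :=
  inner_eq_inner_of_twist _ (colTwist N j) (norm_colTwist N j)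
    (xiVec_swapEnds_apply_eq_colTwist_mul hN i j) (xiVec_swapEnds_apply_eq_colTwist_mul hN k j)

theorem inner_xiVec_of_fst_eq_eq_ite {N : ℕ} (i : ℤ) {j l : ℤ} (hj : 1 ≤ j) (hj' : j ≤ N)
    (hl : 1 ≤ l) (hl' : l ≤ N) :
    inner ℂ (xiVec N i j) (xiVec N i l) = if j = l then 1 else 0 := by
  rw [inner_xiVec_of_fst_eq, inner_fourierVec (by omega), sub_sub_sub_cancel_left]
  simp only [natCast_dvd_sub_iff_eq hj hj' hl hl']

theorem inner_xiVec_of_snd_eq_eq_ite {N : ℕ} {i k : ℤ} (j : ℤ) (hi : 1 ≤ i) (hi' : i ≤ N)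
    (hk : 1 ≤ k) (hk' : k ≤ N) :
    inner ℂ (xiVec N i j) (xiVec N k j) = if i = k then 1 else 0 := by
  rcases eq_or_ne i k with rfl | hik
  · rw [inner_xiVec_of_fst_eq, inner_fourierVec (by omega), sub_self, if_pos (dvd_zero _),
      if_pos rfl]
  · rw [inner_xiVec_of_snd_eq (by omega), inner_fourierVec (by omega), sub_sub_sub_cancel_right,
      if_neg (mt (natCast_dvd_sub_iff_eq hk hk' hi hi').1 hik.symm), if_neg hik]

theorem xiVec_magic_basis_general (N : ℕ) :
    (∀ i j k l : ℤ, 1 ≤ i → i ≤ N → 1 ≤ j → j ≤ N → 1 ≤ k → k ≤ N → 1 ≤ l → l ≤ N →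
      ((i = k ∧ j ≠ l) ∨ (i ≠ k ∧ j = l)) →
      (inner ℂ (xiVec N i j) (xiVec N k l) : ℂ) = 0)
    ∧ (∀ i : ℤ, 1 ≤ i → i ≤ N →
        Orthonormal ℂ (fun p : Fin N => xiVec N i (((p : ℕ) : ℤ) + 1)) ∧
        Submodule.span ℂ (Set.range fun p : Fin N => xiVec N i (((p : ℕ) : ℤ) + 1)) = ⊤)
    ∧ (∀ j : ℤ, 1 ≤ j → j ≤ N →
        Orthonormal ℂ (fun p : Fin N => xiVec N (((p : ℕ) : ℤ) + 1) j) ∧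
        Submodule.span ℂ (Set.range fun p : Fin N => xiVec N (((p : ℕ) : ℤ) + 1) j) = ⊤) := by
  have hshift : ∀ p q : Fin N, ((p : ℕ) : ℤ) + 1 = ((q : ℕ) : ℤ) + 1 ↔ p = q := fun _ _ => by
    rw [add_left_inj, Nat.cast_inj, Fin.val_inj]
  refine ⟨?_, fun i _ _ => ?_, fun j _ _ => ?_⟩
  · rintro i j k l hi hi' hj hj' hk hk' hl hl' (⟨rfl, hjl⟩ | ⟨hik, rfl⟩)
    · rw [inner_xiVec_of_fst_eq_eq_ite i hj hj' hl hl', if_neg hjl]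
    · rw [inner_xiVec_of_snd_eq_eq_ite j hi hi' hk hk', if_neg hik]
  · refine orthonormal_and_span_eq_top_of_inner_eq_ite fun p q => ?_
    rw [inner_xiVec_of_fst_eq_eq_ite i (by omega) (by omega) (by omega) (by omega)]
    simp only [hshift]
  · refine orthonormal_and_span_eq_top_of_inner_eq_ite fun p q => ?_
    rw [inner_xiVec_of_snd_eq_eq_ite j (by omega) (by omega) (by omega) (by omega)]
    simp only [hshift]

theorem xiVec_magic_basis (N : ℕ) (hN : 5 ≤ N) :
    (∀ i j k l : ℤ, 1 ≤ i → i ≤ N → 1 ≤ j → j ≤ N → 1 ≤ k → k ≤ N → 1 ≤ l → l ≤ N →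
      ((i = k ∧ j ≠ l) ∨ (i ≠ k ∧ j = l)) →
      (inner ℂ (xiVec N i j) (xiVec N k l) : ℂ) = 0)
    ∧ (∀ i : ℤ, 1 ≤ i → i ≤ N →
        Orthonormal ℂ (fun p : Fin N => xiVec N i (((p : ℕ) : ℤ) + 1)) ∧
        Submodule.span ℂ (Set.range fun p : Fin N => xiVec N i (((p : ℕ) : ℤ) + 1)) = ⊤)
    ∧ (∀ j : ℤ, 1 ≤ j → j ≤ N →
        Orthonormal ℂ (fun p : Fin N => xiVec N (((p : ℕ) : ℤ) + 1) j) ∧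
        Submodule.span ℂ (Set.range fun p : Fin N => xiVec N (((p : ℕ) : ℤ) + 1) j) = ⊤) :=
  xiVec_magic_basis_general N
end

section
/- Let p and q be self-adjoint idempotents (projections) in a C*-algebra. Then pq = qp if and only if |pq|² = |qp|², where |x|² = x*x. -/
theorem proj_commute_iff_abs_sq_eq {A : Type*} [NormedRing A] [StarRing A] [CStarRing A]
    (p q : A) (hp : p * p = p) (hps : star p = p) (hq : q * q = q) (hqs : star q = q) :
    p * q = q * p ↔ star (p * q) * (p * q) = star (q * p) * (q * p) := by
  constructor
  · intro h; rw [h]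
  · intro h
    simp only [star_mul, hps, hqs] at h
    -- h : q * p * (p * q) = p * q * (q * p)
    have h' : q * (p * q) = p * q * p := by
      calc q * (p * q) = q * p * (p * q) := by
            rw [mul_assoc q p (p * q), ← mul_assoc p p q, hp]
        _ = p * q * (q * p) := h
        _ = p * q * p := by rw [mul_assoc p q (q * p), ← mul_assoc q q p, hq, ← mul_assoc]
    have hXp : p * q * p * p = p * q * p := by rw [mul_assoc, hp]
    have k1 : q * p * (p * q) = p * q * p := by
      rw [mul_assoc q p (p * q), ← mul_assoc p p q, hp]; exact h'
    have k2 : q * p * (p * q * p) = p * q * p := by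
      rw [← mul_assoc, k1, hXp]
    have k3 : p * q * p * (p * q) = p * q * p := by
      rw [mul_assoc (p * q) p (p * q), ← mul_assoc p p q, hp, mul_assoc p q (p * q), h',
        ← mul_assoc, ← mul_assoc, hp]
    have k4 : p * q * p * (p * q * p) = p * q * p := by
      rw [← mul_assoc, k3, hXp]
    have hx : p * q - p * q * p = 0 := by
      rw [← CStarRing.star_mul_self_eq_zero_iff]
      have e : star (p * q - p * q * p) = q * p - p * q * p := by
        simp [star_sub, star_mul, hps, hqs, ← mul_assoc]
      rw [e, sub_mul, mul_sub, mul_sub, k1, k2, k3, k4]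
      abel
    have h1 : p * q = p * q * p := by rwa [sub_eq_zero] at hx
    have h2 : q * p = p * q * p := by
      have := congrArg star hx
      simp only [star_sub, star_mul, hps, hqs, star_zero, ← mul_assoc] at this
      rwa [sub_eq_zero] at this
    rw [h1, h2]
end

section
/- Let P and Q be orthogonal projections on a Hilbert space H with PQ ≠ QP. Then there exists a unit vector x ∈ ran P such that x is orthogonal to ran P ∩ ran Q and to ran P ∩ ker Q, and for such x one has 0 < ⟨x, Qx⟩ < 1. -/
open scoped InnerProductSpace

/-!
Write `K = ran P` and `L = ran Q`, so that `ker Q = Lᗮ`. If no unit vector of `K` were orthogonal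
to both `K ⊓ L` and `K ⊓ Lᗮ`, then `K = (K ⊓ L) ⊕ (K ⊓ Lᗮ)`: subtracting from `x ∈ K` its
projections onto these two orthogonal subspaces leaves a vector of `K` orthogonal to both, hence
zero. Then `Q` maps `K` into itself, and, being self-adjoint, also `Kᗮ`; so `P` and `Q` commute.
For the estimate, `⟪x, Q x⟫ = ‖Q x‖²` and `0 < ‖Q x‖ < ‖x‖ = 1` since `x` lies neither in `Lᗮ`
nor in `L`.
-/

namespace Submodule

variable {𝕜 E : Type*} [RCLike 𝕜] [NormedAddCommGroup E] [InnerProductSpace 𝕜 E]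

theorem isClosed_of_hasOrthogonalProjection (K : Submodule 𝕜 E) [K.HasOrthogonalProjection] :
    IsClosed (K : Set E) :=
  K.range_starProjection ▸
    ContinuousLinearMap.IsIdempotentElem.isClosed_range K.isIdempotentElem_starProjection

instance HasOrthogonalProjection.inf [CompleteSpace E] (K L : Submodule 𝕜 E)
    [K.HasOrthogonalProjection] [L.HasOrthogonalProjection] : (K ⊓ L).HasOrthogonalProjection :=
  have := (K.isClosed_of_hasOrthogonalProjection.inter
    L.isClosed_of_hasOrthogonalProjection).completeSpace_coe
  inferInstance

theorem mem_orthogonal_inf_iff {A B : Submodule 𝕜 E} {x : E} :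
    x ∈ (A ⊓ B)ᗮ ↔ ∀ y, y ∈ A → y ∈ B → ⟪x, y⟫_𝕜 = 0 := by
  simp [mem_orthogonal']

theorem exists_norm_eq_one_mem {p : Submodule 𝕜 E} (hp : p ≠ ⊥) : ∃ x ∈ p, ‖x‖ = 1 := by
  obtain ⟨x, hx, hx0⟩ := p.ne_bot_iff.mp hp
  exact ⟨(‖x‖⁻¹ : 𝕜) • x, p.smul_mem _ hx, norm_smul_inv_norm hx0⟩

theorem le_sup_of_inf_orthogonal_inf_orthogonal_eq_bot {K A B : Submodule 𝕜 E}
    [A.HasOrthogonalProjection] [B.HasOrthogonalProjection]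
    (hA : A ≤ K) (hB : B ≤ K) (hAB : A ⟂ B) (h : K ⊓ Aᗮ ⊓ Bᗮ = ⊥) : K ≤ A ⊔ B := by
  intro x hx
  have hxA : A.starProjection x ∈ A := coe_mem _
  have hxB : B.starProjection x ∈ B := coe_mem _
  have hrK : x - A.starProjection x - B.starProjection x ∈ K :=
    sub_mem (sub_mem hx (hA hxA)) (hB hxB)
  have hrA : x - A.starProjection x - B.starProjection x ∈ Aᗮ :=
    sub_mem (sub_starProjection_mem_orthogonal x) (hAB.ge hxB)
  have hrB : x - A.starProjection x - B.starProjection x ∈ Bᗮ := by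
    rw [sub_right_comm]
    exact sub_mem (sub_starProjection_mem_orthogonal x) (hAB.le hxA)
  have hr : x - A.starProjection x - B.starProjection x = 0 :=
    (mem_bot 𝕜).mp (h ▸ ⟨⟨hrK, hrA⟩, hrB⟩)
  rw [sub_sub, sub_eq_zero] at hr
  exact hr ▸ add_mem_sup hxA hxB

theorem mem_invtSubmodule_starProjection_of_le_sup {K L : Submodule 𝕜 E}
    [L.HasOrthogonalProjection] (h : K ≤ K ⊓ L ⊔ K ⊓ Lᗮ) :
    K ∈ Module.End.invtSubmodule L.starProjection.toLinearMap := by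
  intro x hx
  obtain ⟨a, ⟨haK, haL⟩, b, ⟨-, hbL⟩, rfl⟩ := mem_sup.mp (h hx)
  simpa [starProjection_eq_self_iff.mpr haL, (starProjection_apply_eq_zero_iff L).mpr hbL] using haK

theorem commute_starProjection_of_mem_invtSubmodule [CompleteSpace E] {K : Submodule 𝕜 E}
    [K.HasOrthogonalProjection] {T : E →L[𝕜] E} (hT : IsSelfAdjoint T)
    (hK : K ∈ Module.End.invtSubmodule T.toLinearMap) : Commute K.starProjection T := by
  refine (ContinuousLinearMap.IsIdempotentElem.commute_iff K.isIdempotentElem_starProjection).mpr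
    ⟨by rwa [range_starProjection], ?_⟩
  rw [ker_starProjection]
  exact ContinuousLinearMap.orthogonal_mem_invtSubmodule (by rwa [hT.adjoint_eq])

theorem inner_starProjection_self (K : Submodule 𝕜 E) [K.HasOrthogonalProjection] (v : E) :
    ⟪v, K.starProjection v⟫_𝕜 = (‖K.starProjection v‖ : 𝕜) ^ 2 := by
  calc ⟪v, K.starProjection v⟫_𝕜 = ⟪v, K.starProjection (K.starProjection v)⟫_𝕜 := by
        rw [starProjection_eq_self_iff.mpr (K.starProjection_apply_mem v)]
    _ = ⟪K.starProjection v, K.starProjection v⟫_𝕜 :=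
        (K.inner_starProjection_left_eq_right _ _).symm
    _ = (‖K.starProjection v‖ : 𝕜) ^ 2 := inner_self_eq_norm_sq_to_K _

theorem norm_starProjection_lt_of_notMem {K : Submodule 𝕜 E} [K.HasOrthogonalProjection] {v : E}
    (hv : v ∉ K) : ‖K.starProjection v‖ < ‖v‖ :=
  (K.norm_starProjection_apply_le v).lt_of_ne (mt (K.mem_iff_norm_starProjection v).mpr hv)

theorem norm_starProjection_pos_of_notMem_orthogonal {K : Submodule 𝕜 E}
    [K.HasOrthogonalProjection] {v : E} (hv : v ∉ Kᗮ) : 0 < ‖K.starProjection v‖ :=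
  norm_pos_iff.mpr (mt (starProjection_apply_eq_zero_iff K).mp hv)

theorem notMem_of_mem_orthogonal_of_norm_eq_one {K : Submodule 𝕜 E} {v : E} (hv : v ∈ Kᗮ)
    (hv1 : ‖v‖ = 1) : v ∉ K := fun hvK ↦ by
  simp [disjoint_def.mp K.orthogonal_disjoint v hvK hv] at hv1

end Submodule

open Submodule

theorem exists_unit_vector_of_noncommuting_projections
    {H : Type*} [NormedAddCommGroup H] [InnerProductSpace ℂ H] [CompleteSpace H]
    (P Q : H →L[ℂ] H)
    (hP : P * P = P) (hPs : IsSelfAdjoint P)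
    (hQ : Q * Q = Q) (hQs : IsSelfAdjoint Q)
    (hPQ : P * Q ≠ Q * P) :
    (∃ x : H, ‖x‖ = 1 ∧ P x = x ∧
        (∀ y : H, P y = y → Q y = y → ⟪x, y⟫_ℂ = 0) ∧
        (∀ y : H, P y = y → Q y = 0 → ⟪x, y⟫_ℂ = 0))
    ∧ (∀ x : H, ‖x‖ = 1 → P x = x →
        (∀ y : H, P y = y → Q y = y → ⟪x, y⟫_ℂ = 0) →
        (∀ y : H, P y = y → Q y = 0 → ⟪x, y⟫_ℂ = 0) →
        0 < (⟪x, Q x⟫_ℂ).re ∧ (⟪x, Q x⟫_ℂ).re < 1 ∧ (⟪x, Q x⟫_ℂ).im = 0) := by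
  obtain ⟨K, _, rfl⟩ := isStarProjection_iff_eq_starProjection.mp ⟨hP, hPs⟩
  obtain ⟨L, _, rfl⟩ := isStarProjection_iff_eq_starProjection.mp ⟨hQ, hQs⟩
  simp only [starProjection_eq_self_iff, starProjection_apply_eq_zero_iff, ← mem_orthogonal_inf_iff]
  refine ⟨?_, fun x hx hxK hxA hxB ↦ ?_⟩
  · have hne : K ⊓ (K ⊓ L)ᗮ ⊓ (K ⊓ Lᗮ)ᗮ ≠ ⊥ := fun h ↦ hPQ <| Commute.eq <|
      commute_starProjection_of_mem_invtSubmodule hQs <|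
        mem_invtSubmodule_starProjection_of_le_sup <|
          le_sup_of_inf_orthogonal_inf_orthogonal_eq_bot inf_le_left inf_le_left
            ((isOrtho_orthogonal_right L).mono inf_le_right inf_le_right) h
    obtain ⟨x, ⟨⟨hxK, hxA⟩, hxB⟩, hx⟩ := exists_norm_eq_one_mem hne
    exact ⟨x, hx, hxK, hxA, hxB⟩
  · have hpos := norm_starProjection_pos_of_notMem_orthogonal fun hxL ↦
      notMem_of_mem_orthogonal_of_norm_eq_one hxB hx ⟨hxK, hxL⟩
    have hlt := norm_starProjection_lt_of_notMem fun hxL ↦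
      notMem_of_mem_orthogonal_of_norm_eq_one hxA hx ⟨hxK, hxL⟩
    rw [hx] at hlt
    rw [inner_starProjection_self]
    simp only [← RCLike.re_to_complex, ← RCLike.im_to_complex, ← RCLike.ofReal_pow,
      RCLike.ofReal_re, RCLike.ofReal_im]
    exact ⟨by positivity, pow_lt_one₀ hpos.le hlt two_ne_zero, trivial⟩
end

section
/- Let A be a unital C*-algebra with a magic unitary u = (u_{ij}) ∈ M_N(A) and let h be a faithful tracial state on A. Suppose h(u_{ij}) = 1/N for all i,j, h(u_{ij}u_{kl}) = 1/(N(N−1)) whenever i ≠ k and j ≠ l, and h is invariant under relabeling: h(u_{i_1 j_1}⋯u_{i_n j_n}) = h(u_{σ(i_1)τ(j_1)}⋯u_{σ(i_n)τ(j_n)}) for all permutations σ, τ of {1,…,N}. Then for indices with |{i_1,i_2,i_3}| = |{j_1,j_2,j_3}| = 3, one has h(u_{i_1 j_1} u_{i_2 j_2} u_{i_3 j_3}) = 1/(N(N−1)(N−2)). -/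
/-!
Entries in a common column of a magic unitary are orthogonal: for projections `p i` summing
to `1`, the numbers `h (p k * p i * p k) = h (star (p i * p k) * (p i * p k))` are nonnegative
and sum to `h (p k)`, which is already the term `i = k`, so faithfulness kills `p i * p k`.
Summing `h (u i₁ j₁ * u i₂ j * u i₃ j₃)` over the middle column `j` gives the second moment
`1 / (N (N - 1))` by the row relation; the terms `j = j₁` and `j = j₃` vanish by orthogonality,
and the remaining `N - 2` terms all equal the sought moment by relabeling invariance.
-/

open Finset ComplexOrder

theorem IsStarProjection.star_mul_mul_self_eq {A : Type*} [Ring A] [StarRing A] {p q : A}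
    (hp : IsStarProjection p) (hq : IsStarProjection q) :
    star (p * q) * (p * q) = q * p * q := by
  rw [star_mul, hp.isSelfAdjoint.star_eq, hq.isSelfAdjoint.star_eq, mul_assoc, ← mul_assoc p,
    hp.isIdempotentElem.eq, ← mul_assoc]

theorem IsStarProjection.mul_eq_zero_of_sum_eq_one {A ι : Type*} [Ring A] [StarRing A]
    [Module ℂ A] [Fintype ι] {p : ι → A} (hp : ∀ i, IsStarProjection (p i))
    (hsum : ∑ i, p i = 1) (h : A →ₗ[ℂ] ℂ) (h_pos : ∀ a, 0 ≤ h (star a * a))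
    (h_faithful : ∀ a, h (star a * a) = 0 → a = 0) {i k : ι} (hik : i ≠ k) :
    p i * p k = 0 := by
  classical
  have htotal : ∑ j, h (star (p j * p k) * (p j * p k)) = h (p k) := by
    simp only [(hp _).star_mul_mul_self_eq (hp k), ← map_sum, ← sum_mul, ← mul_sum, hsum,
      mul_one, (hp k).isIdempotentElem.eq]
  have hdiag : h (star (p k * p k) * (p k * p k)) = h (p k) := by
    rw [(hp k).isIdempotentElem.eq, (hp k).isSelfAdjoint.star_eq, (hp k).isIdempotentElem.eq]
  have hrest : ∑ j ∈ univ.erase k, h (star (p j * p k) * (p j * p k)) = 0 := by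
    rwa [← add_sum_erase _ _ (mem_univ k), hdiag, add_eq_left] at htotal
  exact h_faithful _
    ((sum_eq_zero_iff_of_nonneg fun j _ => h_pos _).1 hrest i (mem_erase.2 ⟨hik, mem_univ i⟩))

theorem Fintype.sum_eq_card_sub_two_mul {ι R : Type*} [Fintype ι] [CommRing R] {f : ι → R}
    {a b : ι} (hab : a ≠ b) (ha : f a = 0) (hb : f b = 0) {c : R}
    (hc : ∀ j, j ≠ a → j ≠ b → f j = c) :
    ∑ j, f j = ((Fintype.card ι : R) - 2) * c := by
  classical
  have hf : ∀ j, f j = c - (if j = a then c else 0) - (if j = b then c else 0) := by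
    intro j
    by_cases hja : j = a
    · subst hja; simp [ha, hab]
    by_cases hjb : j = b
    · subst hjb; simp [hb, hja]
    simp [hc j hja hjb, hja, hjb]
  simp only [hf, sum_sub_distrib, sum_ite_eq', sum_const, card_univ, nsmul_eq_mul]
  ring

theorem map_mul_mul_eq_of_relabel {A : Type*} [Ring A] [Module ℂ A] {N : ℕ}
    {u : Fin N → Fin N → A} {h : A →ₗ[ℂ] ℂ}
    (h_relabel : ∀ (n : ℕ) (is js : Fin n → Fin N) (σ τ : Equiv.Perm (Fin N)),
      h ((List.ofFn fun m => u (is m) (js m)).prod) =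
        h ((List.ofFn fun m => u (σ (is m)) (τ (js m))).prod))
    (σ τ : Equiv.Perm (Fin N)) (i₁ i₂ i₃ j₁ j₂ j₃ : Fin N) :
    h (u i₁ j₁ * u i₂ j₂ * u i₃ j₃) =
      h (u (σ i₁) (τ j₁) * u (σ i₂) (τ j₂) * u (σ i₃) (τ j₃)) := by
  simpa [List.ofFn_succ, mul_assoc] using h_relabel 3 ![i₁, i₂, i₃] ![j₁, j₂, j₃] σ τ

theorem haar_degree_three_general
    {A : Type*} [NormedRing A] [StarRing A] [NormedAlgebra ℂ A]
    (N : ℕ) (hN : 3 ≤ N)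
    (u : Fin N → Fin N → A)
    -- magic unitary: entries are projections, rows and columns sum to 1
    (hu_proj : ∀ i j, u i j * u i j = u i j ∧ star (u i j) = u i j)
    (hu_row : ∀ i, ∑ j, u i j = 1)
    (hu_col : ∀ j, ∑ i, u i j = 1)
    -- h is a faithful tracial state
    (h : A →ₗ[ℂ] ℂ)
    (h_pos : ∀ a, ∃ r : ℝ, 0 ≤ r ∧ h (star a * a) = r)
    (h_faithful : ∀ a, h (star a * a) = 0 → a = 0)
    -- invariance under relabeling by pairs of permutations
    (h_relabel : ∀ (n : ℕ) (is js : Fin n → Fin N) (σ τ : Equiv.Perm (Fin N)),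
      h ((List.ofFn fun m => u (is m) (js m)).prod) =
        h ((List.ofFn fun m => u (σ (is m)) (τ (js m))).prod))
    -- degree one and two moments
    (h_deg2 : ∀ i j k l, i ≠ k → j ≠ l →
      h (u i j * u k l) = 1 / ((N : ℂ) * ((N : ℂ) - 1))) :
    ∀ i₁ i₂ i₃ j₁ j₂ j₃ : Fin N,
      i₁ ≠ i₂ → i₁ ≠ i₃ → i₂ ≠ i₃ → j₁ ≠ j₂ → j₁ ≠ j₃ → j₂ ≠ j₃ →
      h (u i₁ j₁ * u i₂ j₂ * u i₃ j₃) =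
        1 / ((N : ℂ) * ((N : ℂ) - 1) * ((N : ℂ) - 2)) := by
  intro i₁ i₂ i₃ j₁ j₂ j₃ hi₁₂ hi₁₃ hi₂₃ hj₁₂ hj₁₃ hj₂₃
  have h_nonneg : ∀ a, 0 ≤ h (star a * a) := fun a => by
    obtain ⟨r, hr, hha⟩ := h_pos a
    exact hha ▸ Complex.zero_le_real.2 hr
  have hcol_orth : ∀ j {i k}, i ≠ k → u i j * u k j = 0 := fun j _ _ =>
    IsStarProjection.mul_eq_zero_of_sum_eq_one (fun i => ⟨(hu_proj i j).1, (hu_proj i j).2⟩)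
      (hu_col j) h h_nonneg h_faithful
  have hmiddle : ∀ j, j ≠ j₁ → j ≠ j₃ →
      h (u i₁ j₁ * u i₂ j * u i₃ j₃) = h (u i₁ j₁ * u i₂ j₂ * u i₃ j₃) := fun j hj₁ hj₃ => by
    simpa [Equiv.swap_apply_of_ne_of_ne hj₁.symm hj₁₂,
      Equiv.swap_apply_of_ne_of_ne hj₃.symm hj₂₃.symm] using map_mul_mul_eq_of_relabel h_relabel 1 (Equiv.swap j j₂) i₁ i₂ i₃ j₁ j j₃
  have hsum := Fintype.sum_eq_card_sub_two_mul (f := fun j => h (u i₁ j₁ * u i₂ j * u i₃ j₃))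
    hj₁₃ (by simp [hcol_orth j₁ hi₁₂]) (by simp [mul_assoc, hcol_orth j₃ hi₂₃]) hmiddle
  rw [← map_sum, ← sum_mul, ← mul_sum, hu_row, mul_one, h_deg2 i₁ j₁ i₃ j₃ hi₁₃ hj₁₃,
    Fintype.card_fin] at hsum
  have hN₂ : (N : ℂ) - 2 ≠ 0 := sub_ne_zero.2 (by exact_mod_cast (by omega : N ≠ 2))
  rw [← div_div, eq_div_iff hN₂, hsum, mul_comm]

theorem haar_degree_three
    {A : Type*} [NormedRing A] [StarRing A] [CStarRing A] [NormedAlgebra ℂ A]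
    (N : ℕ) (hN : 3 ≤ N)
    (u : Fin N → Fin N → A)
    -- magic unitary: entries are projections, rows and columns sum to 1
    (hu_proj : ∀ i j, u i j * u i j = u i j ∧ star (u i j) = u i j)
    (hu_row : ∀ i, ∑ j, u i j = 1)
    (hu_col : ∀ j, ∑ i, u i j = 1)
    -- h is a faithful tracial state
    (h : A →ₗ[ℂ] ℂ)
    (h_one : h 1 = 1)
    (h_pos : ∀ a, ∃ r : ℝ, 0 ≤ r ∧ h (star a * a) = r)
    (h_tracial : ∀ a b, h (a * b) = h (b * a))
    (h_faithful : ∀ a, h (star a * a) = 0 → a = 0)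
    -- invariance under relabeling by pairs of permutations
    (h_relabel : ∀ (n : ℕ) (is js : Fin n → Fin N) (σ τ : Equiv.Perm (Fin N)),
      h ((List.ofFn fun m => u (is m) (js m)).prod) =
        h ((List.ofFn fun m => u (σ (is m)) (τ (js m))).prod))
    -- degree one and two moments
    (h_deg1 : ∀ i j, h (u i j) = 1 / (N : ℂ))
    (h_deg2 : ∀ i j k l, i ≠ k → j ≠ l →
      h (u i j * u k l) = 1 / ((N : ℂ) * ((N : ℂ) - 1))) :
    ∀ i₁ i₂ i₃ j₁ j₂ j₃ : Fin N,
      i₁ ≠ i₂ → i₁ ≠ i₃ → i₂ ≠ i₃ → j₁ ≠ j₂ → j₁ ≠ j₃ → j₂ ≠ j₃ →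
      h (u i₁ j₁ * u i₂ j₂ * u i₃ j₃) =
        1 / ((N : ℂ) * ((N : ℂ) - 1) * ((N : ℂ) - 2)) :=
  haar_degree_three_general N hN u hu_proj hu_row hu_col h h_pos h_faithful h_relabel h_deg2
end

section
/- Under the hypotheses of the previous statement, and assuming additionally that h(u_{11}u_{22}u_{11}u_{22}) > 0 and h(u_{11}u_{22}u_{11}u_{23}) > 0, one has −(N−4)!/N! < α₄ < 0, where α₄ = h(u_{11}u_{22}u_{13}u_{24}). Consequently 0 < h(u_{11}u_{22}u_{11}u_{22}) < (N−2)!/N! and ((N−3)/(N−2))·(N−3)!/N! < h(u_{11}u_{22}u_{11}u_{33}) < (N−3)!/N!. -/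
/-!
Write `α₁, α₂, α₃, α₄` for the moments of the statement with the indices `1, 2, 3, 4` replaced by
distinct `a, b, c, d`, and `W = u a a * u b b * u a a`, so that `h W = 1 / (N (N - 1))`.
Summing `h (W * u i j)` over a free row or column index gives `h W`, since rows and columns of `u`
sum to `1`; relabeling invariance makes all summands with an index outside the three already
used equal, and orthogonality of the projections in a row or column kills the others. These
linear relations give
`α₁ = h W - (N - 2) α₂`, `α₃ = (h W - α₂) / (N - 2)` and `α₄ = -α₂ / (N - 3)`,
so every bound follows from `0 < α₂` and `0 < α₁`, i.e. `0 < α₂ < h W / (N - 2)`.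
-/

section

open Finset Equiv

theorem factorial_sub_div_factorial {N k : ℕ} (hk : k ≤ N) :
    ((N - k).factorial : ℝ) / N.factorial = 1 / ∏ i ∈ range k, ((N : ℝ) - i) := by
  have hcast : ∏ i ∈ range k, ((N - i : ℕ) : ℝ) = ∏ i ∈ range k, ((N : ℝ) - i) :=
    prod_congr rfl fun i hi => Nat.cast_sub (by simp at hi; omega)
  rw [← Nat.factorial_mul_descFactorial hk, Nat.descFactorial_eq_prod_range, Nat.cast_mul,
    Nat.cast_prod, hcast, div_mul_cancel_left₀ (by positivity), one_div]

theorem sum_eq_sum_add_card_compl_nsmul {ι M : Type*} [Fintype ι] [DecidableEq ι]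
    [AddCommMonoid M] (f : ι → M) (s : Finset ι) {c : M} (hc : ∀ x ∉ s, f x = c) :
    ∑ x, f x = ∑ x ∈ s, f x + #sᶜ • c := by
  rw [← sum_add_sum_compl s f, sum_congr rfl fun x hx => hc x (mem_compl.mp hx), sum_const]

section Orthogonality

variable {κ A : Type*} [Fintype κ] [Ring A] [StarRing A] [Module ℂ A]

/-- `∑_{k ≠ l} p l * p k * p l = p l - p l = 0` and each summand is `(p k * p l)⋆ (p k * p l)`,
so positivity and faithfulness of `h` force `p k * p l = 0`. -/
theorem mul_eq_zero_of_sum_eq_one {p : κ → A}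
    (hp : ∀ k, p k * p k = p k ∧ star (p k) = p k) (hsum : ∑ k, p k = 1) {h : A →ₗ[ℂ] ℂ}
    (hpos : ∀ a, ∃ r : ℝ, 0 ≤ r ∧ h (star a * a) = r)
    (hfaith : ∀ a, h (star a * a) = 0 → a = 0) {j l : κ} (hjl : j ≠ l) :
    p j * p l = 0 := by
  classical
  choose r hr_nonneg hr using fun k => hpos (p k * p l)
  have hsq : ∀ k, star (p k * p l) * (p k * p l) = p l * p k * p l := fun k => by
    rw [star_mul, (hp k).2, (hp l).2, mul_assoc (p l) (p k), ← mul_assoc (p k) (p k),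
      (hp k).1, ← mul_assoc]
  have hsum_erase : ∑ k ∈ univ.erase l, p l * p k * p l = 0 := by
    have hfull : ∑ k, p l * p k * p l = p l := by
      rw [← sum_mul, ← mul_sum, hsum, mul_one, (hp l).1]
    rw [← add_sum_erase _ _ (mem_univ l), (hp l).1, (hp l).1] at hfull
    exact add_eq_left.mp hfull
  have hr_sum : ∑ k ∈ univ.erase l, r k = 0 := by
    have := congrArg h hsum_erase
    simp only [map_sum, map_zero, ← hsq, hr] at this
    exact_mod_cast this
  have hrj : r j = 0 :=
    (sum_eq_zero_iff_of_nonneg fun k _ => hr_nonneg k).mp hr_sum j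
      (mem_erase.mpr ⟨hjl, mem_univ j⟩)
  exact hfaith _ (by rw [hr j, hrj, Complex.ofReal_zero])

end Orthogonality

section Relabel

variable {ι A : Type*} [Ring A] [Module ℂ A]

def IsRelabelInvariant₄ (u : ι → ι → A) (h : A →ₗ[ℂ] ℂ) : Prop :=
  ∀ (σ τ : Perm ι) (i₁ j₁ i₂ j₂ i₃ j₃ i₄ j₄ : ι),
    h (u (σ i₁) (τ j₁) * u (σ i₂) (τ j₂) * u (σ i₃) (τ j₃) * u (σ i₄) (τ j₄)) =
      h (u i₁ j₁ * u i₂ j₂ * u i₃ j₃ * u i₄ j₄)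

theorem isRelabelInvariant₄_of_forall_ofFn {u : ι → ι → A} {h : A →ₗ[ℂ] ℂ}
    (hrel : ∀ (n : ℕ) (is js : Fin n → ι) (σ τ : Perm ι),
      h ((List.ofFn fun m => u (is m) (js m)).prod) =
        h ((List.ofFn fun m => u (σ (is m)) (τ (js m))).prod)) :
    IsRelabelInvariant₄ u h := fun σ τ i₁ j₁ i₂ j₂ i₃ j₃ i₄ j₄ => by
  simpa [List.ofFn_succ, mul_assoc] using (hrel 4 ![i₁, i₂, i₃, i₄] ![j₁, j₂, j₃, j₄] σ τ).symm

variable [DecidableEq ι] {u : ι → ι → A} {h : A →ₗ[ℂ] ℂ}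

namespace IsRelabelInvariant₄

theorem map_col_swap (hrel : IsRelabelInvariant₄ u h) (i₁ j₁ i₂ j₂ i₃ j₃ i₄ : ι) {x y : ι}
    (hx : x ∉ ({j₁, j₂, j₃} : Finset ι)) (hy : y ∉ ({j₁, j₂, j₃} : Finset ι)) :
    h (u i₁ j₁ * u i₂ j₂ * u i₃ j₃ * u i₄ x) = h (u i₁ j₁ * u i₂ j₂ * u i₃ j₃ * u i₄ y) := by
  simp only [mem_insert, mem_singleton, not_or] at hx hy
  have := hrel 1 (swap x y) i₁ j₁ i₂ j₂ i₃ j₃ i₄ x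
  simp only [Perm.one_apply, swap_apply_left] at this
  rwa [swap_apply_of_ne_of_ne (Ne.symm hx.1) (Ne.symm hy.1),
    swap_apply_of_ne_of_ne (Ne.symm hx.2.1) (Ne.symm hy.2.1),
    swap_apply_of_ne_of_ne (Ne.symm hx.2.2) (Ne.symm hy.2.2), eq_comm] at this

theorem map_row_swap (hrel : IsRelabelInvariant₄ u h) (i₁ j₁ i₂ j₂ i₃ j₃ j₄ : ι) {x y : ι}
    (hx : x ∉ ({i₁, i₂, i₃} : Finset ι)) (hy : y ∉ ({i₁, i₂, i₃} : Finset ι)) :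
    h (u i₁ j₁ * u i₂ j₂ * u i₃ j₃ * u x j₄) = h (u i₁ j₁ * u i₂ j₂ * u i₃ j₃ * u y j₄) := by
  simp only [mem_insert, mem_singleton, not_or] at hx hy
  have := hrel (swap x y) 1 i₁ j₁ i₂ j₂ i₃ j₃ x j₄
  simp only [Perm.one_apply, swap_apply_left] at this
  rwa [swap_apply_of_ne_of_ne (Ne.symm hx.1) (Ne.symm hy.1),
    swap_apply_of_ne_of_ne (Ne.symm hx.2.1) (Ne.symm hy.2.1),
    swap_apply_of_ne_of_ne (Ne.symm hx.2.2) (Ne.symm hy.2.2), eq_comm] at this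

variable [Fintype ι]

theorem sum_row_eq (hrel : IsRelabelInvariant₄ u h) (hrow : ∀ i, ∑ j, u i j = 1)
    (i₁ j₁ i₂ j₂ i₃ j₃ i : ι) {s : Finset ι} (hs : {j₁, j₂, j₃} ⊆ s) {y : ι} (hy : y ∉ s) :
    ∑ l ∈ s, h (u i₁ j₁ * u i₂ j₂ * u i₃ j₃ * u i l) +
      #sᶜ • h (u i₁ j₁ * u i₂ j₂ * u i₃ j₃ * u i y) = h (u i₁ j₁ * u i₂ j₂ * u i₃ j₃) := by
  rw [← sum_eq_sum_add_card_compl_nsmul _ s fun l hl =>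
      hrel.map_col_swap _ _ _ _ _ _ _ (fun hl₀ => hl (hs hl₀)) fun hy₀ => hy (hs hy₀),
    ← map_sum, ← mul_sum, hrow, mul_one]

theorem sum_col_eq (hrel : IsRelabelInvariant₄ u h) (hcol : ∀ j, ∑ i, u i j = 1)
    (i₁ j₁ i₂ j₂ i₃ j₃ j : ι) {s : Finset ι} (hs : {i₁, i₂, i₃} ⊆ s) {y : ι} (hy : y ∉ s) :
    ∑ k ∈ s, h (u i₁ j₁ * u i₂ j₂ * u i₃ j₃ * u k j) +
      #sᶜ • h (u i₁ j₁ * u i₂ j₂ * u i₃ j₃ * u y j) = h (u i₁ j₁ * u i₂ j₂ * u i₃ j₃) := by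
  rw [← sum_eq_sum_add_card_compl_nsmul _ s fun k hk =>
      hrel.map_row_swap _ _ _ _ _ _ _ (fun hk₀ => hk (hs hk₀)) fun hy₀ => hy (hs hy₀),
    ← map_sum, ← mul_sum, hcol, mul_one]

end IsRelabelInvariant₄

end Relabel

theorem card_compl_nsmul_eq {ι : Type*} [Fintype ι] [DecidableEq ι] (s : Finset ι) (z : ℂ) :
    #sᶜ • z = ((Fintype.card ι : ℂ) - #s) * z := by
  rw [nsmul_eq_mul, card_compl, Nat.cast_sub (card_le_univ s)]

section Moments

variable {ι A : Type*} [Ring A] [Module ℂ A] {u : ι → ι → A} {h : A →ₗ[ℂ] ℂ} {a b c d : ι}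

theorem map_mul_eq_zero_of_mul_eq_zero (htr : ∀ x y, h (x * y) = h (y * x)) {x y : A}
    (m : A) (hyx : y * x = 0) : h (x * m * y) = 0 := by
  rw [htr, ← mul_assoc, hyx, zero_mul, map_zero]

theorem map_mul_mul_eq_of_mul_self (htr : ∀ x y, h (x * y) = h (y * x)) {x : A} (y : A)
    (hx : x * x = x) : h (x * y * x) = h (x * y) := by
  rw [htr, ← mul_assoc, hx]

variable [Fintype ι] [DecidableEq ι]

theorem alpha₁_add_alpha₂_eq (hrel : IsRelabelInvariant₄ u h) (hrow : ∀ i, ∑ j, u i j = 1)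
    (hcol_orth : ∀ j {i k}, i ≠ k → u i j * u k j = 0) (htr : ∀ x y, h (x * y) = h (y * x))
    (hab : a ≠ b) (hac : a ≠ c) (hbc : b ≠ c) :
    h (u a a * u b b * u a a * u b b) +
      ((Fintype.card ι : ℂ) - 2) * h (u a a * u b b * u a a * u b c) =
        h (u a a * u b b * u a a) := by
  have hzero : h (u a a * u b b * u a a * u b a) = 0 := by
    rw [mul_assoc (u a a)]
    exact map_mul_eq_zero_of_mul_eq_zero htr _ (hcol_orth a hab.symm)
  have := hrel.sum_row_eq hrow a a b b a a b (s := {a, b}) (by simp [insert_subset_iff])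
    (y := c) (by simp [hac.symm, hbc.symm])
  rwa [sum_pair hab, hzero, zero_add, card_compl_nsmul_eq, card_pair hab, Nat.cast_two] at this

theorem alpha₂_add_alpha₄_eq (hrel : IsRelabelInvariant₄ u h) (hrow : ∀ i, ∑ j, u i j = 1)
    (hrow_orth : ∀ i {j l}, j ≠ l → u i j * u i l = 0)
    (hcol_orth : ∀ j {i k}, i ≠ k → u i j * u k j = 0) (htr : ∀ x y, h (x * y) = h (y * x))
    (hab : a ≠ b) (hac : a ≠ c) (had : a ≠ d) (hbc : b ≠ c) (hbd : b ≠ d) (hcd : c ≠ d) :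
    h (u a a * u b b * u a a * u b c) +
      ((Fintype.card ι : ℂ) - 3) * h (u a a * u b b * u a c * u b d) = 0 := by
  -- The free index of `α₄` sits in the third factor: rotating `u b d` to the front makes it the
  -- last one, summed over row `a`.
  have hrot : ∀ x₁ x₂ x₃ x₄ : A, h (x₁ * x₂ * x₃ * x₄) = h (x₄ * x₁ * x₂ * x₃) :=
    fun _ _ _ _ => by rw [htr, ← mul_assoc, ← mul_assoc]
  have hα₂ : h (u b d * u a a * u b b * u a a) = h (u a a * u b b * u a a * u b c) := by
    rw [← hrot, hrel.map_col_swap a a b b a a b (x := d) (y := c)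
      (by simp [had.symm, hbd.symm]) (by simp [hac.symm, hbc.symm])]
  have hα₄ : h (u b d * u a a * u b b * u a c) = h (u a a * u b b * u a c * u b d) :=
    (hrot _ _ _ _).symm
  have hb : h (u b d * u a a * u b b * u a b) = 0 := by
    rw [mul_assoc (u b d * u a a), hcol_orth b hab.symm, mul_zero, map_zero]
  have hd : h (u b d * u a a * u b b * u a d) = 0 := by
    rw [mul_assoc (u b d)]
    exact map_mul_eq_zero_of_mul_eq_zero htr _ (hcol_orth d hab)
  have hprefix : h (u b d * u a a * u b b) = 0 :=
    map_mul_eq_zero_of_mul_eq_zero htr _ (hrow_orth b hbd)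
  have := hrel.sum_row_eq hrow b d a a b b a (s := {a, b, d}) (by simp [insert_subset_iff])
    (y := c) (by simp [hac.symm, hbc.symm, hcd])
  rw [sum_insert (by simp [hab, had]), sum_pair hbd, hα₂, hb, hd, hprefix, card_compl_nsmul_eq,
    card_eq_three.mpr ⟨a, b, d, hab, had, hbd, rfl⟩, hα₄] at this
  push_cast at this
  linear_combination this

/-- With `W = u a a * u b b * u a a`, the sums of `h (W * u i j)` over row `b` and over
column `b` share the term `α₁`. -/
theorem map_mul_col_eq_alpha₂ (hrel : IsRelabelInvariant₄ u h) (hrow : ∀ i, ∑ j, u i j = 1)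
    (hcol : ∀ j, ∑ i, u i j = 1) (hrow_orth : ∀ i {j l}, j ≠ l → u i j * u i l = 0)
    (hcol_orth : ∀ j {i k}, i ≠ k → u i j * u k j = 0) (htr : ∀ x y, h (x * y) = h (y * x))
    (hab : a ≠ b) (hac : a ≠ c) (had : a ≠ d) (hbc : b ≠ c) (hbd : b ≠ d) :
    h (u a a * u b b * u a a * u d b) = h (u a a * u b b * u a a * u b c) := by
  have hn : (Fintype.card ι : ℂ) - 2 ≠ 0 := by
    have : 3 ≤ Fintype.card ι := card_eq_three.mpr ⟨a, b, c, hab, hac, hbc, rfl⟩ ▸ card_le_univ _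
    exact sub_ne_zero.mpr (by exact_mod_cast (show Fintype.card ι ≠ 2 by omega))
  have hzero : h (u a a * u b b * u a a * u a b) = 0 := by
    rw [mul_assoc (u a a * u b b), hrow_orth a hab, mul_zero, map_zero]
  have hcol_b := hrel.sum_col_eq hcol a a b b a a b (s := {a, b}) (by simp [insert_subset_iff])
    (y := c) (by simp [hac.symm, hbc.symm])
  rw [sum_pair hab, hzero, zero_add, card_compl_nsmul_eq, card_pair hab, Nat.cast_two] at hcol_b
  have hrow_b := alpha₁_add_alpha₂_eq hrel hrow hcol_orth htr hab hac hbc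
  rw [← hrel.map_row_swap a a b b a a b (x := c) (y := d)
    (by simp [hac.symm, hbc.symm]) (by simp [had.symm, hbd.symm])]
  exact mul_left_cancel₀ hn (by linear_combination hcol_b - hrow_b)

theorem alpha₂_add_alpha₃_eq (hrel : IsRelabelInvariant₄ u h) (hrow : ∀ i, ∑ j, u i j = 1)
    (hcol : ∀ j, ∑ i, u i j = 1) (hrow_orth : ∀ i {j l}, j ≠ l → u i j * u i l = 0)
    (hcol_orth : ∀ j {i k}, i ≠ k → u i j * u k j = 0) (htr : ∀ x y, h (x * y) = h (y * x))
    (hab : a ≠ b) (hac : a ≠ c) (had : a ≠ d) (hbc : b ≠ c) (hbd : b ≠ d) (hcd : c ≠ d) :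
    h (u a a * u b b * u a a * u b c) +
      ((Fintype.card ι : ℂ) - 2) * h (u a a * u b b * u a a * u c c) =
        h (u a a * u b b * u a a) := by
  have hzero_da : h (u a a * u b b * u a a * u d a) = 0 := by
    rw [mul_assoc (u a a)]
    exact map_mul_eq_zero_of_mul_eq_zero htr _ (hcol_orth a had.symm)
  have hzero_ac : h (u a a * u b b * u a a * u a c) = 0 := by
    rw [mul_assoc (u a a * u b b), hrow_orth a hac, mul_zero, map_zero]
  have hrow_d := hrel.sum_row_eq hrow a a b b a a d (s := {a, b}) (by simp [insert_subset_iff])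
    (y := c) (by simp [hac.symm, hbc.symm])
  have hcol_c := hrel.sum_col_eq hcol a a b b a a c (s := {a, b, c}) (by simp [insert_subset_iff])
    (y := d) (by simp [had.symm, hbd.symm, hcd.symm])
  rw [sum_pair hab, hzero_da, zero_add,
    map_mul_col_eq_alpha₂ hrel hrow hcol hrow_orth hcol_orth htr hab hac had hbc hbd,
    card_compl_nsmul_eq, card_pair hab] at hrow_d
  rw [sum_insert (by simp [hab, hac]), sum_pair hbc, hzero_ac, zero_add, card_compl_nsmul_eq,
    card_eq_three.mpr ⟨a, b, c, hab, hac, hbc, rfl⟩] at hcol_c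
  push_cast at hrow_d hcol_c
  linear_combination ((Fintype.card ι : ℂ) - 2) * hcol_c - ((Fintype.card ι : ℂ) - 3) * hrow_d

end Moments

theorem degree_four_bounds_of_alpha₂ {x r₁ r₂ : ℝ} (hx : 3 < x) (hr₁ : 0 < r₁) (hr₂ : 0 < r₂)
    (hsum : r₁ + (x - 2) * r₂ = 1 / (x * (x - 1))) :
    (-(1 / (x * (x - 1) * (x - 2) * (x - 3))) < -r₂ / (x - 3) ∧ -r₂ / (x - 3) < 0) ∧
    r₁ < 1 / (x * (x - 1)) ∧
    ((x - 3) / (x - 2) * (1 / (x * (x - 1) * (x - 2))) < (1 / (x * (x - 1)) - r₂) / (x - 2) ∧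
      (1 / (x * (x - 1)) - r₂) / (x - 2) < 1 / (x * (x - 1) * (x - 2))) := by
  have h₂ : 0 < x - 2 := by linarith
  have h₃ : 0 < x - 3 := by linarith
  simp only [← div_div _ _ (x - 3), ← div_div _ _ (x - 2)]
  set c := 1 / (x * (x - 1))
  have hr₂_lt : r₂ < c / (x - 2) := by rw [lt_div_iff₀' h₂]; linarith
  refine ⟨⟨?_, ?_⟩, by linarith [mul_pos h₂ hr₂], ?_, ?_⟩
  · rw [neg_div, neg_lt_neg_iff]; exact div_lt_div_of_pos_right hr₂_lt h₃
  · exact div_neg_of_neg_of_pos (neg_neg_of_pos hr₂) h₃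
  · rw [← mul_div_assoc, div_lt_div_iff_of_pos_right h₂, div_mul_eq_mul_div, div_lt_iff₀ h₂]
    rw [lt_div_iff₀' h₂] at hr₂_lt
    nlinarith
  · exact div_lt_div_of_pos_right (by linarith) h₂

theorem factorial_bounds_of_alpha₂ {N : ℕ} (hN : 4 ≤ N) {r₁ r₂ : ℝ} (hr₁ : 0 < r₁) (hr₂ : 0 < r₂)
    (hsum : r₁ + (N - 2) * r₂ = 1 / (N * (N - 1))) :
    (-(((N - 4).factorial : ℝ) / N.factorial) < -r₂ / (N - 3) ∧ -r₂ / (N - 3) < 0) ∧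
    r₁ < ((N - 2).factorial : ℝ) / N.factorial ∧
    (((N : ℝ) - 3) / (N - 2) * (((N - 3).factorial : ℝ) / N.factorial) <
        (1 / (N * (N - 1)) - r₂) / (N - 2) ∧
      (1 / (N * (N - 1)) - r₂) / (N - 2) < ((N - 3).factorial : ℝ) / N.factorial) := by
  simp only [factorial_sub_div_factorial hN, factorial_sub_div_factorial (by omega : 3 ≤ N),
    factorial_sub_div_factorial (by omega : 2 ≤ N), prod_range_succ, prod_range_zero,
    Nat.cast_ofNat, Nat.cast_one, Nat.cast_zero, one_mul, sub_zero]
  exact degree_four_bounds_of_alpha₂ (by exact_mod_cast (by omega : 3 < N)) hr₁ hr₂ hsum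

end

theorem haar_degree_four_bounds
    {A : Type*} [NormedRing A] [StarRing A] [NormedAlgebra ℂ A]
    (N : ℕ) (hN : 5 ≤ N)
    (u : Fin N → Fin N → A)
    -- magic unitary: entries are projections, rows and columns sum to 1
    (hu_proj : ∀ i j, u i j * u i j = u i j ∧ star (u i j) = u i j)
    (hu_row : ∀ i, ∑ j, u i j = 1)
    (hu_col : ∀ j, ∑ i, u i j = 1)
    -- h is a faithful tracial state
    (h : A →ₗ[ℂ] ℂ)
    (h_pos : ∀ a, ∃ r : ℝ, 0 ≤ r ∧ h (star a * a) = r)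
    (h_tracial : ∀ a b, h (a * b) = h (b * a))
    (h_faithful : ∀ a, h (star a * a) = 0 → a = 0)
    -- invariance under relabeling by pairs of permutations
    (h_relabel : ∀ (n : ℕ) (is js : Fin n → Fin N) (σ τ : Equiv.Perm (Fin N)),
      h ((List.ofFn fun m => u (is m) (js m)).prod) =
        h ((List.ofFn fun m => u (σ (is m)) (τ (js m))).prod))
    -- degree ≤ 3 moments
    (h_deg2 : ∀ i j k l, i ≠ k → j ≠ l →
      h (u i j * u k l) = 1 / ((N : ℂ) * ((N : ℂ) - 1)))
    -- positivity of α₁ = h(u₁₁u₂₂u₁₁u₂₂) and α₂ = h(u₁₁u₂₂u₁₁u₂₃)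
    (h_α₁_pos : ∃ r : ℝ, 0 < r ∧
      h (u ⟨0, by omega⟩ ⟨0, by omega⟩ * u ⟨1, by omega⟩ ⟨1, by omega⟩ *
          u ⟨0, by omega⟩ ⟨0, by omega⟩ * u ⟨1, by omega⟩ ⟨1, by omega⟩) = r)
    (h_α₂_pos : ∃ r : ℝ, 0 < r ∧
      h (u ⟨0, by omega⟩ ⟨0, by omega⟩ * u ⟨1, by omega⟩ ⟨1, by omega⟩ *
          u ⟨0, by omega⟩ ⟨0, by omega⟩ * u ⟨1, by omega⟩ ⟨2, by omega⟩) = r) :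
    -- −(N−4)!/N! < α₄ < 0
    (∃ r : ℝ, h (u ⟨0, by omega⟩ ⟨0, by omega⟩ * u ⟨1, by omega⟩ ⟨1, by omega⟩ *
          u ⟨0, by omega⟩ ⟨2, by omega⟩ * u ⟨1, by omega⟩ ⟨3, by omega⟩) = r ∧
      -(((N - 4).factorial : ℝ) / (N.factorial : ℝ)) < r ∧ r < 0)
    -- 0 < α₁ < (N−2)!/N!
    ∧ (∃ r : ℝ, h (u ⟨0, by omega⟩ ⟨0, by omega⟩ * u ⟨1, by omega⟩ ⟨1, by omega⟩ *
          u ⟨0, by omega⟩ ⟨0, by omega⟩ * u ⟨1, by omega⟩ ⟨1, by omega⟩) = r ∧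
      0 < r ∧ r < ((N - 2).factorial : ℝ) / (N.factorial : ℝ))
    -- ((N−3)/(N−2))·(N−3)!/N! < α₃ < (N−3)!/N!
    ∧ (∃ r : ℝ, h (u ⟨0, by omega⟩ ⟨0, by omega⟩ * u ⟨1, by omega⟩ ⟨1, by omega⟩ *
          u ⟨0, by omega⟩ ⟨0, by omega⟩ * u ⟨2, by omega⟩ ⟨2, by omega⟩) = r ∧
      (((N : ℝ) - 3) / ((N : ℝ) - 2)) * (((N - 3).factorial : ℝ) / (N.factorial : ℝ)) < r ∧
      r < ((N - 3).factorial : ℝ) / (N.factorial : ℝ)) := by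
  set a : Fin N := ⟨0, by omega⟩
  set b : Fin N := ⟨1, by omega⟩
  set c : Fin N := ⟨2, by omega⟩
  set d : Fin N := ⟨3, by omega⟩
  obtain ⟨hab, hac, had, hbc, hbd, hcd⟩ : a ≠ b ∧ a ≠ c ∧ a ≠ d ∧ b ≠ c ∧ b ≠ d ∧ c ≠ d := by
    simp [a, b, c, d]
  have hrel := isRelabelInvariant₄_of_forall_ofFn h_relabel
  have hrow_orth : ∀ i {j l}, j ≠ l → u i j * u i l = 0 := fun i _ _ =>
    mul_eq_zero_of_sum_eq_one (hu_proj i) (hu_row i) h_pos h_faithful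
  have hcol_orth : ∀ j {i k}, i ≠ k → u i j * u k j = 0 := fun j _ _ =>
    mul_eq_zero_of_sum_eq_one (fun i => hu_proj i j) (hu_col j) h_pos h_faithful
  have hW := (map_mul_mul_eq_of_mul_self h_tracial (u b b) (hu_proj a a).1).trans
    (h_deg2 a a b b hab hab)
  have h₁ := alpha₁_add_alpha₂_eq hrel hu_row hcol_orth h_tracial hab hac hbc
  have h₃ := alpha₂_add_alpha₃_eq hrel hu_row hu_col hrow_orth hcol_orth h_tracial
    hab hac had hbc hbd hcd
  have h₄ := alpha₂_add_alpha₄_eq hrel hu_row hrow_orth hcol_orth h_tracial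
    hab hac had hbc hbd hcd
  obtain ⟨r₁, hr₁, hα₁⟩ := h_α₁_pos
  obtain ⟨r₂, hr₂, hα₂⟩ := h_α₂_pos
  simp only [Fintype.card_fin, hW, hα₁, hα₂] at h₁ h₃ h₄
  have hsum : r₁ + (N - 2) * r₂ = 1 / (N * (N - 1)) := by exact_mod_cast h₁
  obtain ⟨hα₄_bounds, hα₁_lt, hα₃_bounds⟩ := factorial_bounds_of_alpha₂ (by omega) hr₁ hr₂ hsum
  refine ⟨⟨-r₂ / (N - 3), ?_, hα₄_bounds⟩, ⟨r₁, hα₁, hr₁, hα₁_lt⟩,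
    ⟨(1 / (N * (N - 1)) - r₂) / (N - 2), ?_, hα₃_bounds⟩⟩
  · push_cast
    rw [eq_div_iff (sub_ne_zero.mpr (by exact_mod_cast (by omega : N ≠ 3)))]
    linear_combination h₄
  · push_cast
    rw [eq_div_iff (sub_ne_zero.mpr (by exact_mod_cast (by omega : N ≠ 2)))]
    linear_combination h₃
end
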